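/- For the polynomial g(x0,x1,y0,y1,z0,z1) = x0y1 + x0z1 + x1y0 + x1y1z0 + x1y1z1 + y0z0, the quotient ring ℂ[x0,x1,y0,y1,z0,z1]/(∂g/∂x0, ∂g/∂x1, ∂g/∂y0, ∂g/∂y1, ∂g/∂z0, ∂g/∂z1) is a 4-dimensional ℂ-vector space. -/

import Mathlib

/-!
Writing `a = x₁` and `b = y₁`, the partials with respect to `x₀, y₀, z₀, z₁` express
`z₁ = -b`, `z₀ = -a` and `x₀ = y₀ = -ab` in the Jacobian algebra, and the remaining two partials
become `a² = -2ab = b²`. These relations give `3a²b = 0 = 3ab²`, so `1, a, b, ab` span.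
They are independent because the assignment `a ↦ ε + ωδ`, `b ↦ ωε + δ`, with `ω` a primitive
cube root of unity, satisfies the same relations in `ℂ[ε, δ]/(ε², δ²)`, where `ab = -ωεδ`.
-/

open MvPolynomial

/-- g = x0y1 + x0z1 + x1y0 + x1y1z0 + x1y1z1 + y0z0 with
(x0,x1,y0,y1,z0,z1) = (X 0,…,X 5). -/
noncomputable def g11 : MvPolynomial (Fin 6) ℂ :=
  X 0 * X 3 + X 0 * X 5 + X 1 * X 2 + X 1 * X 3 * X 4 + X 1 * X 3 * X 5 + X 2 * X 4

theorem mul_mul_eq_zero_of_mul_self_eq_neg_two_mul {R : Type*} [CommRing R] {a b : R}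
    (h3 : IsUnit (3 : R)) (ha : a * a = -2 * (a * b)) (hb : b * b = -2 * (a * b)) :
    a * (a * b) = 0 := by
  refine h3.mul_right_eq_zero.1 ?_
  linear_combination (-b) * ha + 2 * a * hb

theorem toSubmodule_adjoin_eq_span {K R : Type*} [CommRing K] [CommRing R] [Algebra K R]
    {a b : R} (h3 : IsUnit (3 : R)) (ha : a * a = -2 * (a * b)) (hb : b * b = -2 * (a * b)) :
    Subalgebra.toSubmodule (Algebra.adjoin K {a, b}) = Submodule.span K {1, a, b, a * b} := by
  set S := Submodule.span K ({1, a, b, a * b} : Set R)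
  have mem : ∀ x ∈ ({1, a, b, a * b} : Set R), x ∈ S := fun x hx => Submodule.subset_span hx
  have neg_two_mul_mem : -(2 * (a * b)) ∈ S := by
    rw [two_mul]
    exact S.neg_mem (S.add_mem (mem (a * b) (by simp)) (mem (a * b) (by simp)))
  have haab : a * (a * b) = 0 := mul_mul_eq_zero_of_mul_self_eq_neg_two_mul h3 ha hb
  have hbab : b * (a * b) = 0 := by
    rw [mul_comm a b]
    exact mul_mul_eq_zero_of_mul_self_eq_neg_two_mul h3 (by rw [mul_comm b a]; exact hb)
      (by rw [mul_comm b a]; exact ha)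
  have mul_mem : ∀ x ∈ Algebra.adjoin K {a, b}, ∀ y ∈ S, x * y ∈ S := by
    intro x hx
    induction hx using Algebra.adjoin_induction with
    | mem x hx =>
      suffices S ≤ S.comap (LinearMap.mulLeft K x) from fun y hy => this hy
      rw [Submodule.span_le]
      rcases hx with hx | hx <;> rw [hx]
      · simp [Set.insert_subset_iff, ha, haab, neg_two_mul_mem, mem]
      · simp [Set.insert_subset_iff, hb, hbab, neg_two_mul_mem, mem, mul_comm b a]
    | algebraMap r =>
      exact fun y hy => by simpa [Algebra.algebraMap_eq_smul_one] using S.smul_mem r hy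
    | add x y _ _ hx hy =>
      exact fun z hz => by rw [add_mul]; exact S.add_mem (hx z hz) (hy z hz)
    | mul x y _ _ hx hy => exact fun z hz => by rw [mul_assoc]; exact hx _ (hy z hz)
  refine le_antisymm (fun x hx => by simpa using mul_mem x hx 1 (mem 1 (by simp))) ?_
  have ha' : a ∈ Algebra.adjoin K {a, b} := Algebra.subset_adjoin (by simp)
  have hb' : b ∈ Algebra.adjoin K {a, b} := Algebra.subset_adjoin (by simp)
  refine Submodule.span_le.2 ?_
  simp only [Set.insert_subset_iff, Set.singleton_subset_iff]
  exact ⟨Subalgebra.one_mem _, ha', hb', Subalgebra.mul_mem _ ha' hb'⟩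

theorem IsPrimitiveRoot.sq_add_self_add_one_eq_zero {K : Type*} [CommRing K] [IsDomain K] {ω : K}
    (hω : IsPrimitiveRoot ω 3) : ω ^ 2 + ω + 1 = 0 := by
  have h := hω.geom_sum_eq_zero (by norm_num)
  simp only [Finset.sum_range_succ, Finset.sum_range_zero, pow_zero, pow_one, zero_add] at h
  linear_combination h

section CubeRootForm

open TrivSqZeroExt DualNumber

variable {K : Type*} [Field K] {ω : K}

/-- `ε + ωδ` in `K[ε, δ]/(ε², δ²)`, where `δ = inl ε` is the inner dual unit. -/
noncomputable def cubeRootFormA (ω : K) : DualNumber (DualNumber K) :=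
  ε + algebraMap K _ ω * inl ε

noncomputable def cubeRootFormB (ω : K) : DualNumber (DualNumber K) :=
  algebraMap K _ ω * ε + inl ε

theorem cubeRootForm_mul_self (hω : IsPrimitiveRoot ω 3) :
    cubeRootFormA ω * cubeRootFormA ω = -2 * (cubeRootFormA ω * cubeRootFormB ω) ∧
      cubeRootFormB ω * cubeRootFormB ω = -2 * (cubeRootFormA ω * cubeRootFormB ω) := by
  set w := algebraMap K (DualNumber (DualNumber K)) ω
  have hε : (ε : DualNumber (DualNumber K)) * ε = 0 := eps_mul_eps
  have hδ : (inl ε : DualNumber (DualNumber K)) * inl ε = 0 := by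
    rw [← inl_mul, eps_mul_eps, inl_zero]
  have hw : w ^ 2 + w + 1 = 0 := by
    rw [← map_pow, ← map_add, ← map_one (algebraMap K _), ← map_add,
      hω.sq_add_self_add_one_eq_zero, map_zero]
  unfold cubeRootFormA cubeRootFormB
  constructor
  · linear_combination (1 + 2 * w) * hε + (w ^ 2 + 2 * w) * hδ + 2 * ε * inl ε * hw
  · linear_combination (w ^ 2 + 2 * w) * hε + (1 + 2 * w) * hδ + 2 * ε * inl ε * hw

theorem linearIndependent_cubeRootForm (hω : IsPrimitiveRoot ω 3) :
    LinearIndependent K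
      ![1, cubeRootFormA ω, cubeRootFormB ω, cubeRootFormA ω * cubeRootFormB ω] := by
  have hω3 := hω.sq_add_self_add_one_eq_zero
  have hω0 : ω ≠ 0 := hω.ne_zero (by norm_num)
  have hω2 : ω + 2 ≠ 0 := fun h => hω.ne_one (by norm_num) (by linear_combination ω * h - hω3)
  rw [Fintype.linearIndependent_iff]
  intro c hc
  have h0 : c 0 = 0 := by
    simpa [Fin.sum_univ_four, cubeRootFormA, cubeRootFormB, algebraMap_eq_inl']
      using congrArg (fun z => z.fst.fst) hc
  have h1 : c 1 * ω + c 2 = 0 := by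
    simpa [Fin.sum_univ_four, cubeRootFormA, cubeRootFormB, algebraMap_eq_inl']
      using congrArg (fun z => z.fst.snd) hc
  have h2 : c 1 + c 2 * ω = 0 := by
    simpa [Fin.sum_univ_four, cubeRootFormA, cubeRootFormB, algebraMap_eq_inl']
      using congrArg (fun z => z.snd.fst) hc
  have h3 : c 3 * (ω * ω) + c 3 = 0 := by
    simpa [Fin.sum_univ_four, cubeRootFormA, cubeRootFormB, algebraMap_eq_inl']
      using congrArg (fun z => z.snd.snd) hc
  have hc1 : c 1 = 0 := (mul_eq_zero.1 (by linear_combination h2 - ω * h1 + c 1 * hω3 :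
    (ω + 2) * c 1 = 0)).resolve_left hω2
  have hc2 : c 2 = 0 := by linear_combination h1 - ω * hc1
  have hc3 : c 3 = 0 := (mul_eq_zero.1 (by linear_combination c 3 * hω3 - h3 :
    ω * c 3 = 0)).resolve_left hω0
  intro i
  fin_cases i <;> assumption

end CubeRootForm

noncomputable def jacobianIdeal {σ R : Type*} [CommRing R] (f : MvPolynomial σ R) :
    Ideal (MvPolynomial σ R) :=
  Ideal.span (Set.range fun i => pderiv i f)

theorem adjoin_range_mk_X_eq_top {σ R : Type*} [CommRing R] (I : Ideal (MvPolynomial σ R)) :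
    Algebra.adjoin R (Set.range fun i => Ideal.Quotient.mk I (X i)) = ⊤ := by
  rw [Algebra.adjoin_range_eq_range_aeval, ← mkₐ_eq_aeval, AlgHom.range_eq_top]
  exact Ideal.Quotient.mkₐ_surjective R I

theorem aeval_mk_X_pderiv_eq_zero {σ R : Type*} [CommRing R] (f : MvPolynomial σ R) (i : σ) :
    aeval (fun j => Ideal.Quotient.mk (jacobianIdeal f) (X j)) (pderiv i f) = 0 := by
  rw [← mkₐ_eq_aeval, Ideal.Quotient.mkₐ_eq_mk, Ideal.Quotient.eq_zero_iff_mem]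
  exact Ideal.subset_span ⟨i, rfl⟩

theorem pderiv_g11 (i : Fin 6) :
    pderiv i g11 = ![X 3 + X 5, X 2 + X 3 * X 4 + X 3 * X 5, X 1 + X 4,
      X 0 + X 1 * X 4 + X 1 * X 5, X 1 * X 3 + X 2, X 0 + X 1 * X 3] i := by
  fin_cases i <;>
    simp only [Fin.zero_eta, Fin.mk_one, Fin.reduceFinMk, Fin.isValue, g11, map_add,
      Derivation.leibniz, pderiv_X, ne_eq, Fin.reduceEq, not_false_eq_true, Pi.single_eq_of_ne,
      Pi.single_eq_same, smul_eq_mul, mul_zero, mul_one, zero_add, add_zero, Matrix.cons_val,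
      Matrix.cons_val_zero, Matrix.cons_val_one] <;>
    ring

theorem aeval_pderiv_g11_eq_zero_iff {R : Type*} [CommRing R] [Algebra ℂ R] (c : Fin 6 → R) :
    (∀ i, aeval c (pderiv i g11) = 0) ↔
      c = ![-(c 1 * c 3), c 1, -(c 1 * c 3), c 3, -c 1, -c 3] ∧
        c 1 * c 1 = -2 * (c 1 * c 3) ∧ c 3 * c 3 = -2 * (c 1 * c 3) := by
  simp only [Fin.forall_fin_succ, IsEmpty.forall_iff, pderiv_g11, Fin.succ_zero_eq_one,
    Fin.succ_one_eq_two, Fin.reduceSucc, Fin.isValue, Matrix.cons_val, Matrix.cons_val_zero,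
    Matrix.cons_val_one, map_add, map_mul, aeval_X, neg_mul, and_true]
  constructor
  · rintro ⟨h0, h1, h2, h3, h4, h5⟩
    refine ⟨funext fun i => ?_, ?_, ?_⟩
    · fin_cases i <;>
        simp only [Fin.zero_eta, Fin.mk_one, Fin.reduceFinMk, Fin.isValue, Matrix.cons_val,
          Matrix.cons_val_zero, Matrix.cons_val_one]
      · linear_combination h5
      · linear_combination h4
      · linear_combination h2
      · linear_combination h0
    · linear_combination -h3 + h5 + c 1 * h2 + c 1 * h0
    · linear_combination -h1 + h4 + c 3 * h0 + c 3 * h2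
  · rintro ⟨hc, ha, hb⟩
    rw [hc]
    simp only [Fin.isValue, Matrix.cons_val, Matrix.cons_val_zero, Matrix.cons_val_one, mul_neg,
      add_neg_cancel, neg_add_cancel, and_self, and_true, true_and]
    exact ⟨by linear_combination -hb, by linear_combination -ha⟩

section JacobianAlgebra

local notation "x₁" => Ideal.Quotient.mk (jacobianIdeal g11) (X 1)
local notation "y₁" => Ideal.Quotient.mk (jacobianIdeal g11) (X 3)

theorem span_jacobianAlgebra_g11_eq_top : Submodule.span ℂ {1, x₁, y₁, x₁ * y₁} = ⊤ := by
  set c := fun j => Ideal.Quotient.mk (jacobianIdeal g11) (X j)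
  obtain ⟨hc, ha, hb⟩ := (aeval_pderiv_g11_eq_zero_iff c).1 (aeval_mk_X_pderiv_eq_zero g11)
  have h3 : IsUnit (3 : MvPolynomial (Fin 6) ℂ ⧸ jacobianIdeal g11) := by
    simpa only [map_ofNat] using (Ne.isUnit (three_ne_zero (α := ℂ))).map
      (algebraMap ℂ (MvPolynomial (Fin 6) ℂ ⧸ jacobianIdeal g11))
  have ha' : c 1 ∈ Algebra.adjoin ℂ {c 1, c 3} := Algebra.subset_adjoin (by simp)
  have hb' : c 3 ∈ Algebra.adjoin ℂ {c 1, c 3} := Algebra.subset_adjoin (by simp)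
  rw [← toSubmodule_adjoin_eq_span h3 ha hb, Algebra.toSubmodule_eq_top, eq_top_iff,
    ← adjoin_range_mk_X_eq_top, Algebra.adjoin_le_iff, Set.range_subset_iff]
  intro i
  rw [show Ideal.Quotient.mk _ (X i) = c i from rfl, congrFun hc i]
  fin_cases i
  · exact neg_mem (mul_mem ha' hb')
  · exact ha'
  · exact neg_mem (mul_mem ha' hb')
  · exact hb'
  · exact neg_mem ha'
  · exact neg_mem hb'

theorem linearIndependent_jacobianAlgebra_g11 : LinearIndependent ℂ ![1, x₁, y₁, x₁ * y₁] := by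
  obtain ⟨ω, hω⟩ : ∃ ω : ℂ, IsPrimitiveRoot ω 3 :=
    ⟨_, Complex.isPrimitiveRoot_exp 3 (by norm_num)⟩
  set A := cubeRootFormA ω
  set B := cubeRootFormB ω
  set c : Fin 6 → DualNumber (DualNumber ℂ) := ![-(A * B), A, -(A * B), B, -A, -B]
  have hc : ∀ i, aeval c (pderiv i g11) = 0 :=
    (aeval_pderiv_g11_eq_zero_iff c).2 ⟨rfl, cubeRootForm_mul_self hω⟩
  have hker : jacobianIdeal g11 ≤ RingHom.ker (aeval c) :=
    Ideal.span_le.2 (Set.range_subset_iff.2 hc)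
  set φ := Ideal.Quotient.liftₐ (jacobianIdeal g11) (aeval c) fun p hp => hker hp
  have hφ : ∀ i, φ (Ideal.Quotient.mk _ (X i)) = c i := fun i => aeval_X c i
  have hφv : φ.toLinearMap ∘ ![1, x₁, y₁, x₁ * y₁] = ![1, A, B, A * B] := by
    funext j
    fin_cases j <;> simp [hφ, c]
  refine LinearIndependent.of_comp φ.toLinearMap ?_
  rw [hφv]
  exact linearIndependent_cubeRootForm hω

end JacobianAlgebra

/-- The local algebra of g (quotient by the Jacobian ideal) is 4-dimensional. -/
theorem stmt_11 :
    Module.finrank ℂ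
      (MvPolynomial (Fin 6) ℂ ⧸
        Ideal.span ((Set.range fun i : Fin 6 => pderiv i g11))) = 4 := by
  have hspan := span_jacobianAlgebra_g11_eq_top
  exact (Module.finrank_eq_card_basis
    (Module.Basis.mk linearIndependent_jacobianAlgebra_g11 (by
      simpa only [Matrix.range_cons, Matrix.range_empty, Set.union_empty, Set.singleton_union]
        using hspan.ge))).trans (Fintype.card_fin 4)
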